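/- arXiv:1909.05312 — 2 statements merged into one kernel-verified Lean document; each statement's English description precedes it below -/
import Mathlib

section
/- For every α ∈ R there are exactly six ordered pairs (x, x′) ∈ Y × Y with x − x′ = α; each such pair satisfies B(x, x′) = 0; the twelve elements of Y occurring in these six pairs are pairwise distinct; the reflection s_α exchanges x and x′ in each of the six pairs and fixes each of the remaining 15 elements of Y. -/
open scoped TensorProduct

/-- The lattice `L = ℤ⁷` with standard basis `ℓ, e₁, …, e₆`. -/
abbrev L : Type := Fin 7 → ℤ

/-- The symmetric bilinear form `B(x,y) = x₀y₀ − x₁y₁ − ⋯ − x₆y₆`. -/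
def B (x y : L) : ℤ :=
  x 0 * y 0 - (x 1 * y 1 + x 2 * y 2 + x 3 * y 3 + x 4 * y 4 + x 5 * y 5 + x 6 * y 6)

/-- `h = 3ℓ − e₁ − ⋯ − e₆`, the hyperplane class, with `B(h,h) = 3`. -/
def hv : L := ![3, -1, -1, -1, -1, -1, -1]

/-- The set of lines: `Y = {y ∈ L : B(h,y) = 1 ∧ B(y,y) = −1}`. -/
def Yset : Set L := {y | B hv y = 1 ∧ B y y = -1}

/-- The set of roots: `R = {α ∈ L : B(h,α) = 0 ∧ B(α,α) = −2}`. -/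
def Rset : Set L := {a | B hv a = 0 ∧ B a a = -2}

/-- The reflection `s_α(x) = x + B(x,α)·α` as a plain function. -/
def sfun (α : L) (x : L) : L := x + B x α • α

/-- The ordered pairs `(x, x′)` of lines with difference `α`. -/
def linePairs (α : L) : Set (L × L) := {p | p.1 ∈ Yset ∧ p.2 ∈ Yset ∧ p.1 - p.2 = α}

/-! Write `b(y) = B(y, α)` for a line `y`. The lattice `h^⊥` is negative definite, so
Cauchy–Schwarz for `3y - h` and `α` gives `9 b(y)² ≤ B(3y - h, 3y - h) B(α, α) = 24`, i.e.
`b(y) ∈ {-1, 0, 1}`. A pair `(x, x')` of lines with `x - x' = α` is the same as a line `x` with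
`b(x) = -1`, and then `x' = x - α = s_α x`, `b(x') = 1`; the lines fixed by `s_α` are those with
`b = 0`. Over the explicit list of the 27 lines, `∑ b = 9 B(h, α) = 0` and
`∑ b² = 5 B(h, α)² - 6 B(α, α) = 12`, so `b` takes the values `-1, 1, 0` exactly
`6, 6, 15` times. -/

open Finset

lemma B_comm (x y : L) : B x y = B y x := by
  simp only [B]; ring

lemma B_add_left (x y z : L) : B (x + y) z = B x z + B y z := by
  simp only [B, Pi.add_apply]; ring

lemma B_sub_left (x y z : L) : B (x - y) z = B x z - B y z := by
  simp only [B, Pi.sub_apply]; ring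

lemma B_smul_left (c : ℤ) (x y : L) : B (c • x) y = c * B x y := by
  simp only [B, Pi.smul_apply, smul_eq_mul]; ring

lemma B_add_right (x y z : L) : B x (y + z) = B x y + B x z := by
  rw [B_comm, B_add_left, B_comm y, B_comm z]

lemma B_sub_right (x y z : L) : B x (y - z) = B x y - B x z := by
  rw [B_comm, B_sub_left, B_comm y, B_comm z]

lemma B_smul_right (c : ℤ) (x y : L) : B x (c • y) = c * B x y := by
  rw [B_comm, B_smul_left, B_comm]

lemma B_hv_apply (v : L) : B hv v = 3 * v 0 + (v 1 + v 2 + v 3 + v 4 + v 5 + v 6) := by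
  simp only [B, hv, Matrix.cons_val, Matrix.cons_val_zero, Matrix.cons_val_one]; ring

lemma B_hv_hv : B hv hv = 3 := rfl

lemma sq_sum_le_six_mul_sum_sq (a b c d e f : ℤ) :
    (a + b + c + d + e + f) ^ 2 ≤ 6 * (a ^ 2 + b ^ 2 + c ^ 2 + d ^ 2 + e ^ 2 + f ^ 2) := by
  nlinarith [sq_nonneg (a - b), sq_nonneg (a - c), sq_nonneg (a - d), sq_nonneg (a - e),
    sq_nonneg (a - f), sq_nonneg (b - c), sq_nonneg (b - d), sq_nonneg (b - e), sq_nonneg (b - f),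
    sq_nonneg (c - d), sq_nonneg (c - e), sq_nonneg (c - f), sq_nonneg (d - e), sq_nonneg (d - f),
    sq_nonneg (e - f)]

lemma B_self_nonpos_of_B_hv_eq_zero {v : L} (hv0 : B hv v = 0) : B v v ≤ 0 := by
  rw [B_hv_apply] at hv0
  have hcs := sq_sum_le_six_mul_sum_sq (v 1) (v 2) (v 3) (v 4) (v 5) (v 6)
  have h9 : (3 * v 0) ^ 2 = (v 1 + v 2 + v 3 + v 4 + v 5 + v 6) ^ 2 := by
    rw [show 3 * v 0 = -(v 1 + v 2 + v 3 + v 4 + v 5 + v 6) by linarith]; ring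
  simp only [B]
  nlinarith [sq_nonneg (v 1), sq_nonneg (v 2), sq_nonneg (v 3), sq_nonneg (v 4), sq_nonneg (v 5),
    sq_nonneg (v 6)]

lemma sq_B_le_of_B_hv_eq_zero {v w : L} (hv0 : B hv v = 0) (hw0 : B hv w = 0)
    (hww : B w w < 0) : B v w ^ 2 ≤ B v v * B w w := by
  have h := B_self_nonpos_of_B_hv_eq_zero (v := B w w • v - B v w • w)
    (by rw [B_sub_right, B_smul_right, B_smul_right, hv0, hw0]; ring)
  simp only [B_sub_left, B_sub_right, B_smul_left, B_smul_right, B_comm w v] at h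
  nlinarith

lemma ne_zero_of_mem_Rset {α : L} (hα : α ∈ Rset) : α ≠ 0 := by
  rintro rfl
  simp [Rset, B] at hα

lemma B_eq_neg_one_or_zero_or_one {y α : L} (hy : y ∈ Yset) (hα : α ∈ Rset) :
    B y α = -1 ∨ B y α = 0 ∨ B y α = 1 := by
  obtain ⟨hy1, hy2⟩ := hy
  obtain ⟨hα1, hα2⟩ := hα
  have hcs := sq_B_le_of_B_hv_eq_zero (v := (3 : ℤ) • y - hv) (w := α)
    (by rw [B_sub_right, B_smul_right, hy1, B_hv_hv]; norm_num) hα1 (by rw [hα2]; norm_num)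
  simp only [B_sub_left, B_sub_right, B_smul_left, B_smul_right, B_comm y hv,
    hy1, hy2, hα1, hα2, B_hv_hv] at hcs
  have : -1 ≤ B y α ∧ B y α ≤ 1 := by constructor <;> nlinarith
  omega

lemma sfun_of_B_eq_neg_one {α x : L} (h : B x α = -1) : sfun α x = x - α := by
  rw [sfun, h, neg_one_smul, sub_eq_add_neg]

lemma sfun_of_B_eq_one {α x : L} (h : B x α = 1) : sfun α x = x + α := by
  rw [sfun, h, one_smul]

section Root

variable {α : L}

lemma B_fst_eq_neg_one_and_B_snd_eq_one {p : L × L} (hα : α ∈ Rset) (hp : p ∈ linePairs α) :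
    B p.1 α = -1 ∧ B p.2 α = 1 := by
  obtain ⟨⟨-, hx⟩, ⟨-, hx'⟩, rfl⟩ := hp
  have := hα.2
  simp only [B_sub_left, B_sub_right, B_comm p.2 p.1] at this ⊢
  constructor <;> linarith

lemma sub_mem_Yset {x : L} (hα : α ∈ Rset) (hx : x ∈ Yset) (hxα : B x α = -1) :
    x - α ∈ Yset := by
  refine ⟨?_, ?_⟩
  · rw [B_sub_right, hx.1, hα.1]; norm_num
  · rw [B_sub_left, B_sub_right, B_sub_right, B_comm α x, hx.2, hα.2, hxα]; norm_num

lemma add_mem_Yset {x : L} (hα : α ∈ Rset) (hx : x ∈ Yset) (hxα : B x α = 1) :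
    x + α ∈ Yset := by
  refine ⟨?_, ?_⟩
  · rw [B_add_right, hx.1, hα.1]; norm_num
  · rw [B_add_left, B_add_right, B_add_right, B_comm α x, hx.2, hα.2, hxα]; norm_num

lemma mem_linePairs_iff {p : L × L} (hα : α ∈ Rset) :
    p ∈ linePairs α ↔ p.1 ∈ Yset ∧ B p.1 α = -1 ∧ p.2 = p.1 - α := by
  refine ⟨fun hp => ⟨hp.1, (B_fst_eq_neg_one_and_B_snd_eq_one hα hp).1, ?_⟩, ?_⟩
  · rw [← hp.2.2]; abel
  · rintro ⟨hx, hxα, h2⟩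
    exact ⟨hx, h2 ▸ sub_mem_Yset hα hx hxα, by rw [h2]; abel⟩

lemma linePairs_eq_image (hα : α ∈ Rset) :
    linePairs α = (fun x => (x, x - α)) '' {x ∈ Yset | B x α = -1} := by
  ext ⟨x, x'⟩
  simp only [mem_linePairs_iff hα, Set.mem_image, Set.mem_ofPred_eq, Prod.mk.injEq]
  constructor
  · rintro ⟨hx, hxα, rfl⟩; exact ⟨x, ⟨hx, hxα⟩, rfl, rfl⟩
  · rintro ⟨x, ⟨hx, hxα⟩, rfl, rfl⟩; exact ⟨hx, hxα, rfl⟩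

lemma B_eq_zero_of_mem_linePairs {p : L × L} (hα : α ∈ Rset) (hp : p ∈ linePairs α) :
    B p.1 p.2 = 0 := by
  obtain ⟨⟨-, hx⟩, ⟨-, hx'⟩, rfl⟩ := hp
  have := hα.2
  rw [B_sub_left, B_sub_right, B_sub_right, B_comm p.2 p.1] at this
  linarith

lemma sfun_eq_self_iff {x : L} (hα : α ∈ Rset) : sfun α x = x ↔ B x α = 0 := by
  rw [sfun, add_eq_left, smul_eq_zero, or_iff_left (ne_zero_of_mem_Rset hα)]

lemma linePairs_endpoints_eq (hα : α ∈ Rset) :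
    {x : L | ∃ p ∈ linePairs α, x = p.1 ∨ x = p.2} = {y ∈ Yset | B y α ≠ 0} := by
  ext y
  constructor
  · rintro ⟨p, hp, rfl | rfl⟩
    · exact ⟨hp.1, by simp [(B_fst_eq_neg_one_and_B_snd_eq_one hα hp).1]⟩
    · exact ⟨hp.2.1, by simp [(B_fst_eq_neg_one_and_B_snd_eq_one hα hp).2]⟩
  · rintro ⟨hy, hyα⟩
    rcases B_eq_neg_one_or_zero_or_one hy hα with h | h | h
    · exact ⟨(y, y - α), (mem_linePairs_iff hα).2 ⟨hy, h, rfl⟩, Or.inl rfl⟩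
    · exact absurd h hyα
    · exact ⟨(y + α, y), ⟨add_mem_Yset hα hy h, hy, add_sub_cancel_left y α⟩, Or.inr rfl⟩

end Root

/-- The 27 lines: the exceptional classes `eᵢ`, the strict transforms `ℓ - eᵢ - eⱼ` of the lines
through two blown-up points, and the conics `2ℓ - ∑ₖ eₖ + eᵢ` through five of them. -/
def lines : List L :=
  [![0, 1, 0, 0, 0, 0, 0], ![0, 0, 1, 0, 0, 0, 0], ![0, 0, 0, 1, 0, 0, 0],
   ![0, 0, 0, 0, 1, 0, 0], ![0, 0, 0, 0, 0, 1, 0], ![0, 0, 0, 0, 0, 0, 1],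
   ![1, -1, -1, 0, 0, 0, 0], ![1, -1, 0, -1, 0, 0, 0], ![1, -1, 0, 0, -1, 0, 0],
   ![1, -1, 0, 0, 0, -1, 0], ![1, -1, 0, 0, 0, 0, -1], ![1, 0, -1, -1, 0, 0, 0],
   ![1, 0, -1, 0, -1, 0, 0], ![1, 0, -1, 0, 0, -1, 0], ![1, 0, -1, 0, 0, 0, -1],
   ![1, 0, 0, -1, -1, 0, 0], ![1, 0, 0, -1, 0, -1, 0], ![1, 0, 0, -1, 0, 0, -1],
   ![1, 0, 0, 0, -1, -1, 0], ![1, 0, 0, 0, -1, 0, -1], ![1, 0, 0, 0, 0, -1, -1],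
   ![2, 0, -1, -1, -1, -1, -1], ![2, -1, 0, -1, -1, -1, -1], ![2, -1, -1, 0, -1, -1, -1],
   ![2, -1, -1, -1, 0, -1, -1], ![2, -1, -1, -1, -1, 0, -1], ![2, -1, -1, -1, -1, -1, 0]]

lemma lines_nodup : lines.Nodup := by decide

lemma card_lines_toFinset : lines.toFinset.card = 27 := by
  rw [List.toFinset_card_of_nodup lines_nodup]; rfl

lemma eq_of_coords {y : L} {a b c d e f g : ℤ} (h0 : y 0 = a) (h1 : y 1 = b) (h2 : y 2 = c)
    (h3 : y 3 = d) (h4 : y 4 = e) (h5 : y 5 = f) (h6 : y 6 = g) : y = ![a, b, c, d, e, f, g] := by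
  funext i; fin_cases i
  exacts [h0, h1, h2, h3, h4, h5, h6]

lemma forall_eq_zero_or_eq_of_sum_mul_sub_eq_zero {ι : Type*} {s : Finset ι} {u : ι → ℤ} {c : ℤ}
    (hc : c = 1 ∨ c = -1) (h : ∑ i ∈ s, u i * (u i - c) = 0) : ∀ i ∈ s, u i = 0 ∨ u i = c := by
  have hnonneg : ∀ t : ℤ, 0 ≤ t * (t - c) := by
    intro t
    rcases hc with rfl | rfl
    · rcases le_or_gt t 0 with ht | ht <;> nlinarith
    · rcases le_or_gt t (-1) with ht | ht <;> nlinarith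
  intro i hi
  have := (Finset.sum_eq_zero_iff_of_nonneg (fun j _ => hnonneg (u j))).1 h i hi
  rwa [mul_eq_zero, sub_eq_zero] at this

lemma mem_lines_of_mem_Yset {y : L} (hy : y ∈ Yset) : y ∈ lines := by
  obtain ⟨h1, h2⟩ := hy
  rw [B_hv_apply] at h1
  simp only [B] at h2
  have hcs := sq_sum_le_six_mul_sum_sq (y 1) (y 2) (y 3) (y 4) (y 5) (y 6)
  have hy0 : 0 ≤ y 0 ∧ y 0 ≤ 2 := by
    have : 3 * y 0 ^ 2 ≤ 6 * y 0 + 5 := by nlinarith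
    constructor <;> nlinarith
  obtain ⟨c, hc, hcoord⟩ : ∃ c : ℤ, (c = 1 ∧ y 0 = 0 ∨ c = -1 ∧ (y 0 = 1 ∨ y 0 = 2)) ∧
      ∀ i ∈ (univ : Finset (Fin 6)), y i.succ = 0 ∨ y i.succ = c := by
    have key (c : ℤ) (hc : c = 1 ∨ c = -1) (h : y 0 ^ 2 + 3 * c * y 0 + 1 - c = 0) :
        ∀ i ∈ (univ : Finset (Fin 6)), y i.succ = 0 ∨ y i.succ = c :=
      forall_eq_zero_or_eq_of_sum_mul_sub_eq_zero hc (by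
        simp only [Fin.sum_univ_six, Fin.reduceSucc, Fin.succ_zero_eq_one, Fin.succ_one_eq_two]
        linear_combination h - h2 - c * h1)
    rcases (by omega : y 0 = 0 ∨ y 0 = 1 ∨ y 0 = 2) with h0 | h0 | h0
    · exact ⟨1, .inl ⟨rfl, h0⟩, key 1 (.inl rfl) (by rw [h0]; norm_num)⟩
    · exact ⟨-1, .inr ⟨rfl, .inl h0⟩, key (-1) (.inr rfl) (by rw [h0]; norm_num)⟩
    · exact ⟨-1, .inr ⟨rfl, .inr h0⟩, key (-1) (.inr rfl) (by rw [h0]; norm_num)⟩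
  have d1 : y 1 = 0 ∨ y 1 = c := hcoord 0 (mem_univ _)
  have d2 : y 2 = 0 ∨ y 2 = c := hcoord 1 (mem_univ _)
  have d3 : y 3 = 0 ∨ y 3 = c := hcoord 2 (mem_univ _)
  have d4 : y 4 = 0 ∨ y 4 = c := hcoord 3 (mem_univ _)
  have d5 : y 5 = 0 ∨ y 5 = c := hcoord 4 (mem_univ _)
  have d6 : y 6 = 0 ∨ y 6 = c := hcoord 5 (mem_univ _)
  rcases hc with ⟨rfl, h0⟩ | ⟨rfl, h0 | h0⟩ <;>
  rcases d1 with e1 | e1 <;> rcases d2 with e2 | e2 <;> rcases d3 with e3 | e3 <;>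
  rcases d4 with e4 | e4 <;> rcases d5 with e5 | e5 <;> rcases d6 with e6 | e6 <;>
  first
    | omega
    | (rw [eq_of_coords h0 e1 e2 e3 e4 e5 e6]; decide)

lemma mem_Yset_of_mem_lines : ∀ y ∈ lines, y ∈ Yset := by
  simp only [Yset, Set.mem_ofPred_eq]
  decide

lemma Yset_eq_lines : Yset = ↑lines.toFinset := by
  ext y
  rw [List.coe_toFinset, Set.mem_ofPred_eq]
  exact ⟨mem_lines_of_mem_Yset, mem_Yset_of_mem_lines y⟩

lemma ncard_sep_Yset (P : L → Prop) [DecidablePred P] :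
    {y ∈ Yset | P y}.ncard = #{y ∈ lines.toFinset | P y} := by
  rw [Yset_eq_lines, ← Set.ncard_coe_finset, Finset.coe_filter]
  rfl

lemma sum_B_lines (x : L) : ∑ y ∈ lines.toFinset, B y x = 9 * B hv x := by
  rw [List.sum_toFinset _ lines_nodup]
  simp only [lines, B, hv, List.map_cons, List.map_nil, List.sum_cons, List.sum_nil,
    Matrix.cons_val, Matrix.cons_val_zero, Matrix.cons_val_one]
  ring

lemma sum_sq_B_lines (x : L) : ∑ y ∈ lines.toFinset, B y x ^ 2 = 5 * B hv x ^ 2 - 6 * B x x := by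
  rw [List.sum_toFinset _ lines_nodup]
  simp only [lines, B, hv, List.map_cons, List.map_nil, List.sum_cons, List.sum_nil,
    Matrix.cons_val, Matrix.cons_val_zero, Matrix.cons_val_one]
  ring

lemma card_filter_of_sum_eq_zero {ι : Type*} {s : Finset ι} {f : ι → ℤ}
    (hf : ∀ i ∈ s, f i = -1 ∨ f i = 0 ∨ f i = 1) {n : ℕ} (h1 : ∑ i ∈ s, f i = 0)
    (h2 : ∑ i ∈ s, f i ^ 2 = 2 * n) :
    #{i ∈ s | f i = -1} = n ∧ #{i ∈ s | f i ≠ 0} = 2 * n ∧ #{i ∈ s | f i = 0} + 2 * n = #s := by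
  have hlin : ∀ i ∈ s, f i = (if f i = 1 then 1 else 0) - (if f i = -1 then 1 else 0) := by
    intro i hi; rcases hf i hi with h | h | h <;> simp [h]
  have hsq : ∀ i ∈ s, f i ^ 2 = (if f i = 1 then 1 else 0) + (if f i = -1 then 1 else 0) := by
    intro i hi; rcases hf i hi with h | h | h <;> simp [h]
  have hne : ∀ i ∈ s, (if f i ≠ 0 then 1 else 0) = f i ^ 2 := by
    intro i hi; rcases hf i hi with h | h | h <;> simp [h]
  have hne' : (#{i ∈ s | f i ≠ 0} : ℤ) = 2 * n := by rw [← sum_boole, sum_congr rfl hne, h2]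
  rw [sum_congr rfl hlin, sum_sub_distrib, sum_boole, sum_boole] at h1
  rw [sum_congr rfl hsq, sum_add_distrib, sum_boole, sum_boole] at h2
  have hsplit : #{i ∈ s | f i = 0} + #{i ∈ s | f i ≠ 0} = #s := card_filter_add_card_filter_not _
  omega

/-- For every root `α` there are exactly six ordered pairs `(x,x′) ∈ Y × Y` with
`x − x′ = α`; each satisfies `B(x,x′) = 0`; the twelve lines occurring are pairwise
distinct; `s_α` exchanges the members of each pair and fixes each of the remaining
15 lines. -/
theorem root_gives_double_six (α : L) (hα : α ∈ Rset) :
    (linePairs α).Finite ∧ (linePairs α).ncard = 6 ∧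
    (∀ p ∈ linePairs α, B p.1 p.2 = 0) ∧
    {x : L | ∃ p ∈ linePairs α, x = p.1 ∨ x = p.2}.ncard = 12 ∧
    (∀ p ∈ linePairs α, sfun α p.1 = p.2 ∧ sfun α p.2 = p.1) ∧
    (∀ y ∈ Yset, (∀ p ∈ linePairs α, y ≠ p.1 ∧ y ≠ p.2) → sfun α y = y) ∧
    {y ∈ Yset | sfun α y = y}.ncard = 15 := by
  obtain ⟨h6, h12, h15⟩ := card_filter_of_sum_eq_zero (s := lines.toFinset) (f := (B · α)) (n := 6)
    (fun y hy => B_eq_neg_one_or_zero_or_one (mem_Yset_of_mem_lines y (List.mem_toFinset.1 hy)) hα)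
    (by rw [sum_B_lines, hα.1]; rfl) (by rw [sum_sq_B_lines, hα.1, hα.2]; rfl)
  rw [card_lines_toFinset] at h15
  have hfix : {y ∈ Yset | sfun α y = y} = {y ∈ Yset | B y α = 0} := by
    ext y; exact and_congr_right fun _ => sfun_eq_self_iff hα
  refine ⟨?_, ?_, fun p hp => B_eq_zero_of_mem_linePairs hα hp, ?_, ?_, ?_, ?_⟩
  · rw [linePairs_eq_image hα, Yset_eq_lines]
    exact ((lines.toFinset.finite_toSet).sep _).image _
  · rw [linePairs_eq_image hα, Set.ncard_image_of_injective _ fun _ _ h => congrArg Prod.fst h,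
      ncard_sep_Yset, h6]
  · rw [linePairs_endpoints_eq hα, ncard_sep_Yset, h12]
  · intro p hp
    obtain ⟨hx, hx'⟩ := B_fst_eq_neg_one_and_B_snd_eq_one hα hp
    rw [sfun_of_B_eq_neg_one hx, sfun_of_B_eq_one hx', ← hp.2.2]
    exact ⟨sub_sub_cancel _ _, add_sub_cancel _ _⟩
  · intro y hy hne
    have : y ∉ {x : L | ∃ p ∈ linePairs α, x = p.1 ∨ x = p.2} := by
      rintro ⟨p, hp, h | h⟩
      exacts [(hne p hp).1 h, (hne p hp).2 h]
    rw [linePairs_endpoints_eq hα] at this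
    exact (sfun_eq_self_iff hα).2 (not_not.1 fun h => this ⟨hy, h⟩)
  · rw [hfix, ncard_sep_Yset]; omega
end

section
/- The group G acts transitively on Y: for any y, y′ ∈ Y there exists g ∈ G with g(y) = y′. -/
open scoped TensorProduct

/-- `g` is a reflection `s_α` for some root `α ∈ R`. -/
def IsReflection (g : L ≃ₗ[ℤ] L) : Prop := ∃ α ∈ Rset, ∀ x, g x = x + B x α • α

/-- `G = Weyl(E₆)`, the subgroup of `GL(L)` generated by the reflections `s_α`, `α ∈ R`. -/
def G : Subgroup (L ≃ₗ[ℤ] L) := Subgroup.closure {g | IsReflection g}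

/-!
Two disjoint lines `y, z` (i.e. `B(y,z) = 0`) differ by the root `y - z`, and the reflection in
`y - z` exchanges them. The exceptional lines `eₖ = Pi.single k.succ 1` are pairwise disjoint,
and every line `y` is disjoint from some `eₖ`, i.e. has a vanishing coordinate `yₖ`: otherwise
`∑ yₖ² ≥ 6`, so `y₀² ≥ 5`, while Cauchy–Schwarz applied to `∑ yₖ = 1 - 3y₀` and
`∑ yₖ² = y₀² + 1` forces `0 ≤ y₀ ≤ 2`.
-/

def Bform : LinearMap.BilinForm ℤ L :=
  LinearMap.mk₂ ℤ B
    (fun _ _ _ => by simp only [B, Pi.add_apply]; ring)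
    (fun _ _ _ => by simp only [B, Pi.smul_apply, smul_eq_mul]; ring)
    (fun _ _ _ => by simp only [B, Pi.add_apply]; ring)
    (fun _ _ _ => by simp only [B, Pi.smul_apply, smul_eq_mul]; ring)

@[simp] lemma Bform_apply (x y : L) : Bform x y = B x y := rfl

lemma reflection_mem_G {α : L} (hα : α ∈ Rset) :
    Module.reflection (x := α) (f := -Bform.flip α) (by simp [hα.2]) ∈ G :=
  Subgroup.subset_closure ⟨α, hα, fun x => by simp [Module.reflection_apply]⟩

lemma mem_orbit_of_B_eq_zero {y z : L} (hy : y ∈ Yset) (hz : z ∈ Yset) (hyz : B y z = 0) :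
    z ∈ MulAction.orbit G y := by
  have hroot : y - z ∈ Rset := by
    constructor
    · rw [show B hv (y - z) = B hv y - B hv z from map_sub (Bform hv) y z, hy.1, hz.1, sub_self]
    · have : B (y - z) (y - z) = B y y - 2 * B y z + B z z := by
        simp only [B, Pi.sub_apply]; ring
      rw [this, hy.2, hz.2, hyz]; rfl
  have hcoef : B y (y - z) = -1 := by
    rw [show B y (y - z) = B y y - B y z from map_sub (Bform y) y z, hy.2, hyz, sub_zero]
  refine ⟨⟨_, reflection_mem_G hroot⟩, ?_⟩
  change y - (-B y (y - z)) • (y - z) = z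
  rw [hcoef, neg_neg, one_smul, sub_sub_cancel]

lemma B_single_succ (y : L) (k : Fin 6) : B y (Pi.single k.succ 1) = -y k.succ := by
  fin_cases k <;> simp [B]

lemma single_succ_mem_Yset (k : Fin 6) : (Pi.single k.succ 1 : L) ∈ Yset := by
  constructor
  · rw [B_single_succ]; fin_cases k <;> rfl
  · simp [B_single_succ]

lemma exists_succ_eq_zero_of_mem_Yset {y : L} (hy : y ∈ Yset) : ∃ k : Fin 6, y k.succ = 0 := by
  by_contra! hne
  have hlin : 3 * y 0 + ∑ k : Fin 6, y k.succ = 1 := by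
    rw [← hy.1]
    simp only [B, hv, Fin.sum_univ_six, Fin.succ_zero_eq_one, Fin.succ_one_eq_two, Fin.reduceSucc,
      Matrix.cons_val_zero, Matrix.cons_val_one, Matrix.cons_val]
    ring
  have hquad : y 0 ^ 2 - ∑ k : Fin 6, y k.succ ^ 2 = -1 := by
    rw [← hy.2]
    simp only [B, Fin.sum_univ_six, Fin.succ_zero_eq_one, Fin.succ_one_eq_two, Fin.reduceSucc]
    ring
  have hcs := sq_sum_le_card_mul_sum_sq (s := Finset.univ) (f := fun k : Fin 6 => y k.succ)
  have hsq : 6 ≤ ∑ k : Fin 6, y k.succ ^ 2 := by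
    have h1 (k : Fin 6) : 1 ≤ y k.succ ^ 2 :=
      (one_le_sq_iff_one_le_abs _).2 (Int.one_le_abs (hne k))
    simpa using Finset.sum_le_sum fun k (_ : k ∈ Finset.univ) => h1 k
  simp only [Finset.card_univ, Fintype.card_fin, Nat.cast_ofNat] at hcs
  have : 0 ≤ y 0 ∧ y 0 ≤ 2 := by constructor <;> nlinarith
  nlinarith

lemma exists_single_succ_mem_orbit {y : L} (hy : y ∈ Yset) :
    ∃ k : Fin 6, (Pi.single k.succ 1 : L) ∈ MulAction.orbit G y := by
  obtain ⟨k, hk⟩ := exists_succ_eq_zero_of_mem_Yset hy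
  exact ⟨k, mem_orbit_of_B_eq_zero hy (single_succ_mem_Yset k) (by rw [B_single_succ, hk, neg_zero])⟩

lemma single_succ_mem_orbit_single_succ (k m : Fin 6) :
    (Pi.single m.succ 1 : L) ∈ MulAction.orbit G (Pi.single k.succ 1 : L) := by
  rcases eq_or_ne k m with rfl | hkm
  · exact MulAction.mem_orbit_self _
  · refine mem_orbit_of_B_eq_zero (single_succ_mem_Yset k) (single_succ_mem_Yset m) ?_
    rw [B_single_succ, Pi.single_eq_of_ne (Fin.succ_injective _ |>.ne hkm.symm), neg_zero]

/-- `G` acts transitively on the 27 lines. -/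
theorem weyl_transitive_on_lines (y y' : L) (hy : y ∈ Yset) (hy' : y' ∈ Yset) :
    ∃ g ∈ G, g y = y' := by
  obtain ⟨k, hk⟩ := exists_single_succ_mem_orbit hy
  obtain ⟨m, hm⟩ := exists_single_succ_mem_orbit hy'
  have hyy' : y' ∈ MulAction.orbit G y := by
    rw [← MulAction.orbit_eq_iff, ← MulAction.orbit_eq_iff.2 hk, ← MulAction.orbit_eq_iff.2 hm,
      MulAction.orbit_eq_iff]
    exact single_succ_mem_orbit_single_succ k m
  obtain ⟨g, hg⟩ := hyy'
  exact ⟨g, g.2, hg⟩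
end
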